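/- Conjugation of partitions (transposing the Ferrers diagram) defines an involutive graph automorphism of G_n: λ and μ are adjacent in G_n if and only if their conjugates λ' and μ' are adjacent. -/

import Mathlib

/-- Elementary one-cell transfer: move one cell from a part `a` of `l` to another
part `b` (or to a new part, encoded by `b = 0`), discarding zero parts. -/
def PartitionTransfer {n : ℕ} (l m : n.Partition) : Prop :=
  ∃ a ∈ l.parts, ∃ b, (b ∈ l.parts.erase a ∨ b = 0) ∧
    m.parts = Multiset.filter (· ≠ 0) ((l.parts.erase a).erase b + {a - 1, b + 1})

/-- The partition graph `G_n`: partitions of `n`, adjacent iff one is obtained from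
the other by an elementary one-cell transfer producing a different partition. -/
def partitionGraph (n : ℕ) : SimpleGraph (Nat.Partition n) where
  Adj l m := l ≠ m ∧ (PartitionTransfer l m ∨ PartitionTransfer m l)
  symm := ⟨fun _ _ h => ⟨h.1.symm, h.2.symm⟩⟩
  loopless := ⟨fun _ h => h.1 rfl⟩

/-- The hook partition `(n-k, 1^k)`. -/
def hookPartition (n k : ℕ) (h : k + 1 ≤ n) : n.Partition :=
  ⟨Multiset.replicate k 1 + {n - k}, by
    intro i hi
    simp [Multiset.mem_replicate] at hi
    rcases hi with ⟨-, rfl⟩ | rfl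
    · norm_num
    · omega, by
    simp [Multiset.sum_replicate]
    omega⟩

/-- The partition `(1^n)`. -/
def onesPartition (n : ℕ) : n.Partition :=
  ⟨Multiset.replicate n 1, by
    intro i hi
    rw [Multiset.mem_replicate] at hi
    omega, by simp [Multiset.sum_replicate]⟩

/-- The two-part partition `(n-k, k)`. -/
def twoPartPartition (n k : ℕ) (h1 : 1 ≤ k) (h2 : 2 * k ≤ n) : n.Partition :=
  ⟨{n - k, k}, by
    intro i hi
    simp [Multiset.mem_cons] at hi
    rcases hi with rfl | rfl <;> omega, by
    simp
    omega⟩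

/-- The multiset of column lengths of the Ferrers diagram with row lengths `s`. -/
def conjParts (s : Multiset ℕ) : Multiset ℕ :=
  (Multiset.range s.sup).map fun j => (s.filter fun a => j < a).card

private theorem conjParts_aux_inner (a N : ℕ) (ha : a ≤ N) :
    (∑ j ∈ Finset.range N, if a > j then 1 else 0) = a := by
  rw [Finset.sum_boole]
  have : (Finset.range N).filter (fun j => a > j) = Finset.range a := by
    ext j; simp; omega
  rw [this]; simp

private theorem conjParts_aux (s : Multiset ℕ) (N : ℕ) (hs : ∀ a ∈ s, a ≤ N) :
    (∑ j ∈ Finset.range N, Multiset.countP (fun a => j < a) s) = s.sum := by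
  induction s using Multiset.induction with
  | empty => simp
  | cons a s ih =>
    have ha : a ≤ N := hs a (Multiset.mem_cons_self a s)
    have ih' := ih fun b hb => hs b (Multiset.mem_cons_of_mem hb)
    simp only [Multiset.countP_cons, Finset.sum_add_distrib, ih', Multiset.sum_cons]
    rw [conjParts_aux_inner a N ha]
    omega

theorem conjParts_sum (s : Multiset ℕ) : (conjParts s).sum = s.sum := by
  have h1 : (conjParts s).sum
      = ∑ j ∈ Finset.range s.sup, Multiset.countP (fun a => j < a) s := by
    simp [conjParts, Multiset.countP_eq_card_filter]
    rfl
  rw [h1, conjParts_aux]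
  intro a ha
  exact Multiset.le_sup ha

/-- The conjugate partition: transpose of the Ferrers diagram, so that the `j`-th
part of the conjugate is `#{i : l_i ≥ j}`. -/
def conjPartition {n : ℕ} (l : n.Partition) : n.Partition :=
  ⟨conjParts l.parts, by
    intro i hi
    simp only [conjParts, Multiset.mem_map, Multiset.mem_range] at hi
    obtain ⟨j, hj, rfl⟩ := hi
    rw [Multiset.card_pos]
    intro h
    have : l.parts.sup ≤ j := by
      rw [Multiset.sup_le]
      intro b hb
      by_contra hbj
      have : b ∈ Multiset.filter (fun a => j < a) l.parts :=
        Multiset.mem_filter.2 ⟨hb, by omega⟩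
      simp [h] at this
    omega, by rw [conjParts_sum, l.parts_sum]⟩

/-- The staircase partition `(t, t-1, ..., 2, 1)` of `t*(t+1)/2`. -/
def staircasePartition (t : ℕ) : (t * (t + 1) / 2).Partition :=
  ⟨(Multiset.range t).map (· + 1), by
    intro i hi
    simp [Multiset.mem_map] at hi
    omega, by
    have h : ((Multiset.range t).map (· + 1)).sum = ∑ i ∈ Finset.range (t + 1), i := by
      rw [Finset.sum_range_succ']
      rfl
    rw [h, Finset.sum_range_id]
    simp [Nat.mul_comm]⟩

/-!
Encode a partition by its column lengths `colLen λ j = #{i | λᵢ > j}`, which determine it.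
Conjugation transposes the Ferrers diagram: cell `(i, w)` lies in `λ'` iff `(w, i)` lies in `λ`,
which gives `λ'' = λ`. A transfer `a ↦ a - 1, b ↦ b + 1` moves the last cell of column `a - 1`
to the bottom of column `b`, i.e. `colLen μ + δ_{a-1} = colLen λ + δ_b`, and every such
one-cell move between two partitions is a transfer. Transposed, the same cell moves from row
`colLen λ (a - 1) - 1` to row `colLen λ b`, so the conjugates differ by a one-cell move as well.
-/

/-- Column `j` (counted from `0`) of the Ferrers diagram with row lengths `s` has
`colLen s j` cells. -/
def colLen (s : Multiset ℕ) (j : ℕ) : ℕ := s.countP (j < ·)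

section ColLen

variable {s t : Multiset ℕ}

theorem colLen_add (s t : Multiset ℕ) : colLen (s + t) = colLen s + colLen t :=
  funext fun _ => Multiset.countP_add _ _ _

theorem colLen_singleton_succ (x : ℕ) : colLen {x + 1} = colLen {x} + Pi.single x 1 := by
  funext j
  simp only [colLen, ← Multiset.cons_zero, Multiset.countP_cons, Multiset.countP_zero,
    Pi.add_apply, Pi.single_apply]
  split_ifs <;> omega

@[simp] theorem colLen_singleton_zero : colLen {0} = 0 := rfl

theorem colLen_erase_add_singleton {b : ℕ} (hb : b ∈ s) :
    colLen (s.erase b) + colLen {b} = colLen s := by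
  conv_rhs => rw [← Multiset.cons_erase hb, ← Multiset.singleton_add, add_comm]
  rw [colLen_add]

@[simp] theorem colLen_erase_zero (s : Multiset ℕ) : colLen (s.erase 0) = colLen s := by
  by_cases h : 0 ∈ s
  · simpa using colLen_erase_add_singleton h
  · rw [Multiset.erase_of_notMem h]

@[simp] theorem colLen_filter_ne_zero (s : Multiset ℕ) :
    colLen (s.filter (· ≠ 0)) = colLen s :=
  funext fun _ => (Multiset.countP_filter _ _ _).trans <|
    Multiset.countP_congr rfl fun _ _ => propext (and_iff_left_of_imp Nat.ne_zero_of_lt)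

theorem colLen_antitone (s : Multiset ℕ) : Antitone (colLen s) := fun _ _ hij => by
  simp only [colLen, Multiset.countP_eq_card_filter]
  exact Multiset.card_le_card (Multiset.monotone_filter_right s fun _ => lt_of_le_of_lt hij)

theorem colLen_eq_zero_of_sup_le {j : ℕ} (h : s.sup ≤ j) : colLen s j = 0 :=
  Multiset.countP_eq_zero.2 fun _ hx => not_lt.2 ((Multiset.le_sup hx).trans h)

theorem lt_sup_of_colLen_pos {j : ℕ} (h : 0 < colLen s j) : j < s.sup := by
  by_contra hj
  rw [colLen_eq_zero_of_sup_le (not_lt.1 hj)] at h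
  exact h.false

theorem colLen_eq_count_add_colLen_succ (s : Multiset ℕ) (v : ℕ) :
    colLen s v = s.count (v + 1) + colLen s (v + 1) := by
  induction s using Multiset.induction with
  | empty => rfl
  | cons a s ih =>
    simp only [colLen, Multiset.countP_cons, Multiset.count_cons] at ih ⊢
    split_ifs <;> omega

theorem eq_of_colLen_eq (hs : 0 ∉ s) (ht : 0 ∉ t) (h : colLen s = colLen t) : s = t := by
  ext v
  cases v with
  | zero => rw [Multiset.count_eq_zero.2 hs, Multiset.count_eq_zero.2 ht]
  | succ v =>
    have hs := colLen_eq_count_add_colLen_succ s v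
    have ht := colLen_eq_count_add_colLen_succ t v
    rw [h] at hs
    omega

end ColLen

theorem Nat.Partition.zero_notMem_parts {n : ℕ} (l : n.Partition) : 0 ∉ l.parts :=
  fun h => (l.parts_pos h).false

theorem Nat.Partition.eq_of_colLen_eq {n : ℕ} {l m : n.Partition}
    (h : colLen l.parts = colLen m.parts) : l = m :=
  Nat.Partition.ext (_root_.eq_of_colLen_eq l.zero_notMem_parts m.zero_notMem_parts h)

section Conjugate

open Finset

variable {s : Multiset ℕ}

theorem colLen_conjParts {N : ℕ} (hN : s.sup ≤ N) (w : ℕ) :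
    colLen (conjParts s) w = #{j ∈ range N | w < colLen s j} := by
  have hmap : conjParts s = (Multiset.range s.sup).map (colLen s) :=
    Multiset.map_congr rfl fun _ _ => (Multiset.countP_eq_card_filter _ _).symm
  rw [colLen, hmap, Multiset.countP_map]
  change #{j ∈ range s.sup | w < colLen s j} = _
  congr 1
  ext j
  simp only [mem_filter, mem_range]
  exact ⟨fun h => ⟨h.1.trans_le hN, h.2⟩,
    fun h => ⟨lt_sup_of_colLen_pos (Nat.zero_lt_of_lt h.2), h.2⟩⟩

theorem lt_colLen_conjParts_iff {i w : ℕ} : i < colLen (conjParts s) w ↔ w < colLen s i := by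
  rw [colLen_conjParts le_rfl]
  constructor
  · contrapose!
    intro h
    calc #{j ∈ range s.sup | w < colLen s j} ≤ #(range i) := card_le_card fun j hj => by
          simp only [mem_filter, mem_range] at hj ⊢
          by_contra! hij
          exact (h.trans_lt' (hj.2.trans_le (colLen_antitone s hij))).false
      _ = i := card_range i
  · intro h
    calc i < #(range (i + 1)) := by simp
      _ ≤ _ := card_le_card fun j hj => by
          have hw : w < colLen s j := h.trans_le (colLen_antitone s (mem_range_succ_iff.1 hj))
          exact mem_filter.2 ⟨mem_range.2 (lt_sup_of_colLen_pos (Nat.zero_lt_of_lt hw)), hw⟩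

@[simp] theorem conjPartition_parts {n : ℕ} (l : n.Partition) :
    (conjPartition l).parts = conjParts l.parts := rfl

theorem conjPartition_involutive {n : ℕ} : Function.Involutive (@conjPartition n) := fun l =>
  Nat.Partition.eq_of_colLen_eq <| funext fun w => eq_of_forall_lt_iff fun i => by
    simp only [conjPartition_parts, lt_colLen_conjParts_iff]

end Conjugate

section CellMove

open Finset

variable {s t : Multiset ℕ} {p q : ℕ}

theorem colLen_transfer {b : ℕ} (ha : p + 1 ∈ s) (hb : b ∈ s.erase (p + 1) ∨ b = 0) :
    colLen (((s.erase (p + 1)).erase b + {p, b + 1}).filter (· ≠ 0)) + Pi.single p 1 =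
      colLen s + Pi.single b 1 := by
  have hs : colLen s = colLen ((s.erase (p + 1)).erase b) + colLen {b} + colLen {p + 1} := by
    rw [← colLen_erase_add_singleton ha]
    congr 1
    rcases hb with hb | rfl
    · exact (colLen_erase_add_singleton hb).symm
    · simp
  rw [colLen_filter_ne_zero, hs, Multiset.insert_eq_cons, ← Multiset.singleton_add, colLen_add,
    colLen_add, colLen_singleton_succ, colLen_singleton_succ]
  abel

theorem succ_mem_of_colLen_add_single_eq (hpq : p ≠ q)
    (h : colLen t + Pi.single p 1 = colLen s + Pi.single q 1) : p + 1 ∈ s := by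
  have ev := fun j => congrFun h j
  simp only [Pi.add_apply, Pi.single_apply] at ev
  have hp := ev p
  have hp1 := ev (p + 1)
  have ht := colLen_antitone t (Nat.le_add_right p 1)
  have hcount := colLen_eq_count_add_colLen_succ s p
  rw [← Multiset.count_pos]
  split_ifs at hp hp1 <;> omega

theorem mem_erase_or_eq_zero_of_colLen_add_single_eq (hpq : p ≠ q)
    (h : colLen t + Pi.single p 1 = colLen s + Pi.single q 1) :
    q ∈ s.erase (p + 1) ∨ q = 0 := by
  rcases q with _ | q
  · exact .inr rfl
  refine .inl (Multiset.count_pos.1 ?_)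
  have ev := fun j => congrFun h j
  simp only [Pi.add_apply, Pi.single_apply] at ev
  have hq := ev q
  have hq1 := ev (q + 1)
  have ht := colLen_antitone t (Nat.le_add_right q 1)
  have hcount := colLen_eq_count_add_colLen_succ s q
  rcases eq_or_ne q p with rfl | hqp
  · rw [Multiset.count_erase_self]
    split_ifs at hq hq1 <;> omega
  · rw [Multiset.count_erase_of_ne (by omega)]
    split_ifs at hq hq1 <;> omega

theorem colLen_conjParts_add_single_eq (hpq : p ≠ q)
    (h : colLen t + Pi.single p 1 = colLen s + Pi.single q 1) :
    colLen (conjParts t) + Pi.single (colLen s p - 1) 1 =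
      colLen (conjParts s) + Pi.single (colLen s q) 1 := by
  have ev := fun j => congrFun h j
  simp only [Pi.add_apply, Pi.single_apply] at ev
  funext w
  set N := s.sup + t.sup + p + q + 1
  have hp : p ∈ range N := mem_range.2 (by omega)
  have hq : q ∈ range N := mem_range.2 (by omega)
  simp only [Pi.add_apply, Pi.single_apply, colLen_conjParts (show s.sup ≤ N by omega),
    colLen_conjParts (show t.sup ≤ N by omega), card_filter]
  have single_eq_sum (r : ℕ) (f : ℕ → ℕ) (hr : r ∈ range N) : (if w = f r then 1 else 0) =
      ∑ j ∈ range N, if j = r then (if w = f j then 1 else 0) else 0 := by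
    rw [sum_ite_eq', if_pos hr]
  rw [single_eq_sum p (colLen s · - 1) hp, single_eq_sum q (colLen s) hq, ← sum_add_distrib,
    ← sum_add_distrib]
  refine sum_congr rfl fun j _ => ?_
  have hj := ev j
  have hp' := ev p
  split_ifs at * <;> omega

end CellMove

section PartitionGraph

variable {n : ℕ} {l m : n.Partition}

/-- `m` arises from `l` by moving one cell of the Ferrers diagram from the bottom of
column `p` to the bottom of column `q`. -/
def CellMove (l m : n.Partition) : Prop :=
  ∃ p q, colLen m.parts + Pi.single p 1 = colLen l.parts + Pi.single q 1

theorem ne_of_colLen_add_single_eq {p q : ℕ} (hne : l ≠ m)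
    (h : colLen m.parts + Pi.single p 1 = colLen l.parts + Pi.single q 1) : p ≠ q := by
  rintro rfl
  exact hne (Nat.Partition.eq_of_colLen_eq (add_right_cancel h).symm)

theorem partitionTransfer_iff_cellMove (hne : l ≠ m) :
    PartitionTransfer l m ↔ CellMove l m := by
  constructor
  · rintro ⟨a, ha, b, hb, hm⟩
    obtain ⟨p, rfl⟩ := Nat.exists_eq_add_one_of_ne_zero (l.parts_pos ha).ne'
    rw [Nat.add_sub_cancel] at hm
    exact ⟨p, b, hm ▸ colLen_transfer ha hb⟩
  · rintro ⟨p, q, h⟩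
    have hpq := ne_of_colLen_add_single_eq hne h
    have ha := succ_mem_of_colLen_add_single_eq hpq h
    have hb := mem_erase_or_eq_zero_of_colLen_add_single_eq hpq h
    refine ⟨p + 1, ha, q, hb, ?_⟩
    rw [Nat.add_sub_cancel]
    exact eq_of_colLen_eq m.zero_notMem_parts (by simp)
      (add_right_cancel (h.trans (colLen_transfer ha hb).symm))

theorem partitionGraph_adj_iff :
    (partitionGraph n).Adj l m ↔ l ≠ m ∧ (CellMove l m ∨ CellMove m l) :=
  and_congr_right fun hne => by
    rw [partitionTransfer_iff_cellMove hne, partitionTransfer_iff_cellMove hne.symm]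

theorem CellMove.conjPartition (hne : l ≠ m) (h : CellMove l m) :
    CellMove (conjPartition l) (conjPartition m) :=
  let ⟨_, _, h⟩ := h
  ⟨_, _, colLen_conjParts_add_single_eq (ne_of_colLen_add_single_eq hne h) h⟩

theorem partitionGraph_adj_conjPartition (h : (partitionGraph n).Adj l m) :
    (partitionGraph n).Adj (conjPartition l) (conjPartition m) := by
  rw [partitionGraph_adj_iff] at h ⊢
  obtain ⟨hne, hlm | hml⟩ := h
  · exact ⟨conjPartition_involutive.injective.ne hne, .inl (hlm.conjPartition hne)⟩
  · exact ⟨conjPartition_involutive.injective.ne hne, .inr (hml.conjPartition hne.symm)⟩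

end PartitionGraph

/-- Conjugation of partitions is an involutive graph automorphism of `G_n`:
it is an involution, and `λ`, `μ` are adjacent iff `λ'`, `μ'` are adjacent. -/
theorem conj_automorphism (n : ℕ) :
    (∀ l : n.Partition, conjPartition (conjPartition l) = l) ∧
    (∀ l m : n.Partition,
      (partitionGraph n).Adj l m ↔ (partitionGraph n).Adj (conjPartition l) (conjPartition m)) :=
  ⟨conjPartition_involutive, fun _ _ => ⟨partitionGraph_adj_conjPartition, fun h => by
    simpa only [conjPartition_involutive _] using partitionGraph_adj_conjPartition h⟩⟩
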